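/- Let H be a finite group, p a prime, and S a Sylow p-subgroup of H such that Z(S) ≤ O_{p',p}(H). Then Z(S) splits over W_H(S): there exists a subgroup K of Z(S) with Z(S) = W_H(S) × K. -/

import Mathlib

/-- An element `x` is weakly closed in `S` with respect to `G` if the only
`G`-conjugate of `x` lying in `S` is `x` itself. -/
def IsWeaklyClosed {G : Type*} [Group G] (S : Subgroup G) (x : G) : Prop :=
  x ∈ S ∧ ∀ g : G, g⁻¹ * x * g ∈ S → g⁻¹ * x * g = x

/-- `O_p(H)`: the largest normal `p`-subgroup of `H`. -/
def pCore (p : ℕ) (H : Type*) [Group H] : Subgroup H :=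
  ⨆ P ∈ {P : Subgroup H | P.Normal ∧ IsPGroup p P}, P

/-- `O_{p'}(H)`: the largest normal `p'`-subgroup of `H`. -/
def pPrimeCore (p : ℕ) (H : Type*) [Group H] : Subgroup H :=
  ⨆ P ∈ {P : Subgroup H | P.Normal ∧ (Nat.card P).Coprime p}, P

instance pPrimeCore_normal (p : ℕ) (H : Type*) [Group H] : (pPrimeCore p H).Normal := by
  constructor
  intro n hn g
  unfold pPrimeCore at *
  rw [iSup_subtype'] at hn ⊢
  induction hn using Subgroup.iSup_induction' with
  | hp P x hx =>
      exact Subgroup.mem_iSup_of_mem P (P.2.1.conj_mem x hx g)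
  | h1 => simpa using Subgroup.one_mem _
  | hmul x y _ _ hx hy => simpa [mul_assoc] using Subgroup.mul_mem _ hx hy

/-- `O_{p',p}(H)`: the preimage in `H` of `O_p(H / O_{p'}(H))`. -/
def pPrimePCore (p : ℕ) (H : Type*) [Group H] : Subgroup H :=
  (pCore p (H ⧸ pPrimeCore p H)).comap (QuotientGroup.mk' (pPrimeCore p H))

/- ### Auxiliary lemmas -/

open Subgroup Pointwise

lemma aux_card_sup_dvd {G : Type*} [Group G] [Finite G] (A B : Subgroup G) [A.Normal] :
    Nat.card ↥(B ⊔ A) ∣ Nat.card ↥B * Nat.card ↥A := by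
  have h1 : Nat.card ↥(B ⊔ A) =
      Nat.card ((↥(B ⊔ A)) ⧸ (A.subgroupOf (B ⊔ A))) * Nat.card ↥(A.subgroupOf (B ⊔ A)) :=
    Subgroup.card_eq_card_quotient_mul_card_subgroup _
  have h2 : Nat.card ((↥(B ⊔ A)) ⧸ (A.subgroupOf (B ⊔ A))) = Nat.card (↥B ⧸ (A.subgroupOf B)) :=
    (Nat.card_congr (QuotientGroup.quotientInfEquivProdNormalQuotient B A).toEquiv).symm
  have h3 : Nat.card ↥(A.subgroupOf (B ⊔ A)) = Nat.card ↥A :=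
    Nat.card_congr (Subgroup.subgroupOfEquivOfLe le_sup_right).toEquiv
  have h4 : Nat.card (↥B ⧸ (A.subgroupOf B)) ∣ Nat.card ↥B :=
    ⟨Nat.card ↥(A.subgroupOf B), Subgroup.card_eq_card_quotient_mul_card_subgroup _⟩
  rw [h1, h2, h3]
  exact Nat.mul_dvd_mul h4 dvd_rfl

lemma aux_iSup_set_mem {G : Type*} [Group G] [Finite G]
    (Q : Subgroup G → Prop) (hbot : Q ⊥)
    (hsup : ∀ A B, Q A → Q B → Q (A ⊔ B)) :
    Q (⨆ P ∈ {P : Subgroup G | Q P}, P) := by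
  haveI : Fintype (Subgroup G) := Fintype.ofFinite _
  classical
  have heq : (⨆ P ∈ {P : Subgroup G | Q P}, P) =
      (Finset.univ.filter (fun P : Subgroup G => Q P)).sup id := by
    apply le_antisymm
    · exact iSup₂_le fun P hP => Finset.le_sup (f := id) (by simpa using hP)
    · exact Finset.sup_le fun P hP => by
        simp only [Finset.mem_filter] at hP
        exact le_iSup₂ (f := fun P _ => P) P hP.2
  rw [heq]
  apply Finset.sup_induction hbot (by exact fun A hA B hB => hsup A B hA hB)
  intro P hP
  simpa using hP

lemma pPrimeCore_card_coprime (p : ℕ) (H : Type*) [Group H] [Finite H] :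
    (Nat.card (pPrimeCore p H)).Coprime p := by
  unfold pPrimeCore
  refine (aux_iSup_set_mem (fun P : Subgroup H => P.Normal ∧ (Nat.card P).Coprime p)
    ⟨inferInstance, by simp⟩ ?_).2
  rintro A B ⟨hAn, hAc⟩ ⟨hBn, hBc⟩
  refine ⟨@Subgroup.sup_normal _ _ A B hAn hBn, ?_⟩
  exact Nat.Coprime.coprime_dvd_left (@aux_card_sup_dvd _ _ _ B A hBn)
    (Nat.Coprime.mul hAc hBc)

lemma pCore_normal (p : ℕ) (H : Type*) [Group H] : (pCore p H).Normal := by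
  constructor
  intro n hn g
  unfold pCore at *
  rw [iSup_subtype'] at hn ⊢
  induction hn using Subgroup.iSup_induction' with
  | hp P x hx =>
      exact Subgroup.mem_iSup_of_mem P (P.2.1.conj_mem x hx g)
  | h1 => simpa using Subgroup.one_mem _
  | hmul x y _ _ hx hy => simpa [mul_assoc] using Subgroup.mul_mem _ hx hy

lemma pCore_le_sylow {p : ℕ} [Fact p.Prime] {G : Type*} [Group G] [Finite G] (P : Sylow p G) :
    pCore p G ≤ P := by
  apply iSup₂_le
  rintro Q ⟨hQn, hQp⟩
  obtain ⟨T, hQT⟩ := hQp.exists_le_sylow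
  obtain ⟨g, hg⟩ := MulAction.exists_smul_eq G T P
  calc Q = MulAut.conj g • Q := (Subgroup.Normal.conj_smul_eq_self g Q).symm
    _ ≤ MulAut.conj g • (T : Subgroup G) :=
        (Subgroup.pointwise_smul_le_pointwise_smul_iff).mpr hQT
    _ = ((g • T : Sylow p G) : Subgroup G) := by rw [Sylow.smul_def]; rfl
    _ = P := by rw [hg]
set_option maxHeartbeats 1000000 in
/-- If `Z(S) ≤ O_{p',p}(H)`, then `Z(S)` splits over `W_H(S)`. -/
theorem center_splits_over_weakly_closed {H : Type*} [Group H] [Finite H]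
    {p : ℕ} [Fact p.Prime] (S : Sylow p H)
    (h : (S : Subgroup H) ⊓ Subgroup.centralizer (S : Set H) ≤ pPrimePCore p H) :
    ∃ W K : Subgroup H,
      (W : Set H) = {x : H | IsWeaklyClosed (S : Subgroup H) x} ∧
      K ≤ (S : Subgroup H) ⊓ Subgroup.centralizer (S : Set H) ∧
      W ⊔ K = (S : Subgroup H) ⊓ Subgroup.centralizer (S : Set H) ∧
      W ⊓ K = ⊥ := by
  classical
  have hp : p.Prime := Fact.out
  set Z : Subgroup H := (S : Subgroup H) ⊓ Subgroup.centralizer (S : Set H) with hZdef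
  set M : Subgroup H := pPrimeCore p H with hMdef
  have hMc : (Nat.card M).Coprime p := pPrimeCore_card_coprime p H
  set f : H →* H ⧸ M := QuotientGroup.mk' M with hfdef
  have hfs : Function.Surjective f := QuotientGroup.mk'_surjective M
  -- orders of elements of S are p-powers
  have hordS : ∀ x ∈ (S : Subgroup H), ∃ k, orderOf x = p ^ k := by
    intro x hx
    obtain ⟨k, hk⟩ := (IsPGroup.iff_orderOf.mp S.isPGroup') ⟨x, hx⟩
    exact ⟨k, by rwa [orderOf_mk] at hk⟩
  -- S ∩ M is trivial
  have hSM : ∀ x, x ∈ (S : Subgroup H) → x ∈ M → x = 1 := by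
    intro x hx hxM
    obtain ⟨k, hk⟩ := hordS x hx
    have h2 : orderOf x ∣ Nat.card M := Subgroup.orderOf_dvd_natCard M hxM
    rw [hk] at h2
    have h3 : (p ^ k).Coprime (Nat.card M) := Nat.Coprime.pow_left k hMc.symm
    have h4 : p ^ k = 1 := Nat.Coprime.eq_one_of_dvd h3 h2
    rw [← hk] at h4
    exact orderOf_eq_one_iff.mp h4
  have key0 : ∀ x, x ∈ (S : Subgroup H) → f x = 1 → x = 1 := by
    intro x hx h1
    exact hSM x hx ((QuotientGroup.eq_one_iff x).mp h1)
  -- the image of S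
  set Smap : Subgroup (H ⧸ M) := Subgroup.map f (S : Subgroup H) with hSmapdef
  have hSsylow : ((S.mapSurjective hfs : Sylow p (H ⧸ M)) : Subgroup (H ⧸ M)) = Smap :=
    Sylow.coe_mapSurjective hfs S
  haveI hPnorm : (pCore p (H ⧸ M)).Normal := pCore_normal p (H ⧸ M)
  have hPle : pCore p (H ⧸ M) ≤ Smap := by
    have := pCore_le_sylow (S.mapSurjective hfs)
    rwa [hSsylow] at this
  -- elements of Z map into the p-core
  have hfZ : ∀ z ∈ Z, f z ∈ pCore p (H ⧸ M) := by
    intro z hz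
    have := h hz
    unfold pPrimePCore at this
    exact Subgroup.mem_comap.mp this
  -- elements of Z commute with S
  have hZcomm : ∀ z ∈ Z, ∀ t ∈ (S : Subgroup H), t * z = z * t := by
    intro z hz t ht
    exact Subgroup.mem_centralizer_iff.mp hz.2 t ht
  have hfZS : ∀ z ∈ Z, ∀ u ∈ Smap, u * f z = f z * u := by
    intro z hz u hu
    obtain ⟨t, ht, rfl⟩ := hu
    rw [← map_mul, ← map_mul, hZcomm z hz t ht]
  have hfZPcomm : ∀ z ∈ Z, ∀ u ∈ pCore p (H ⧸ M), u * f z = f z * u :=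
    fun z hz u hu => hfZS z hz u (hPle hu)
  -- the subgroup D = pCore ⊓ centralizer(pCore), a commutative group
  set D : Subgroup (H ⧸ M) :=
    pCore p (H ⧸ M) ⊓ Subgroup.centralizer (pCore p (H ⧸ M) : Set (H ⧸ M)) with hDdef
  have hDcomm : ∀ a b : ↥D, a * b = b * a := by
    intro a b
    exact Subtype.ext (Subgroup.mem_centralizer_iff.mp b.2.2 ↑a a.2.1)
  letI : CommGroup ↥D := { (inferInstance : Group ↥D) with mul_comm := hDcomm }
  have hDconj : ∀ (g : H ⧸ M), ∀ u ∈ D, g * u * g⁻¹ ∈ D := by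
    rintro g u ⟨hu1, hu2⟩
    refine ⟨hPnorm.conj_mem u hu1 g, Subgroup.mem_centralizer_iff.mpr ?_⟩
    intro v hv
    have hv' : g⁻¹ * v * g ∈ pCore p (H ⧸ M) := by
      have := hPnorm.conj_mem v hv g⁻¹
      rw [inv_inv] at this
      exact this
    have := Subgroup.mem_centralizer_iff.mp hu2 _ hv'
    -- (g⁻¹ v g) u = u (g⁻¹ v g)  →  v (g u g⁻¹) = (g u g⁻¹) v
    have h2 := congrArg (fun w => g * w * g⁻¹) this
    simpa [mul_assoc] using h2
  have hfZD : ∀ z ∈ Z, f z ∈ D := by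
    intro z hz
    refine ⟨hfZ z hz, Subgroup.mem_centralizer_iff.mpr ?_⟩
    intro v hv
    exact hfZPcomm z hz v hv
  -- the coset space
  haveI : Fintype ((H ⧸ M) ⧸ Smap) := Fintype.ofFinite _
  set Qc := (H ⧸ M) ⧸ Smap with hQcdef
  -- independence of representative
  have hrep : ∀ (c : Qc) (g : H ⧸ M), QuotientGroup.mk g = c → ∀ z ∈ Z,
      c.out * f z * c.out⁻¹ = g * f z * g⁻¹ := by
    intro c g hgc z hz
    have h1 : (QuotientGroup.mk g : Qc) = QuotientGroup.mk c.out := by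
      rw [hgc, QuotientGroup.out_eq']
    have h2 : g⁻¹ * c.out ∈ Smap := QuotientGroup.eq.mp h1
    set s := g⁻¹ * c.out with hs
    have hout : c.out = g * s := by rw [hs]; group
    rw [hout]
    have hcomm := hfZS z hz s h2
    rw [mul_inv_rev]
    calc g * s * f z * (s⁻¹ * g⁻¹) = g * (s * f z * s⁻¹) * g⁻¹ := by group
      _ = g * f z * g⁻¹ := by rw [hcomm]; group
  -- the map Φ
  set v : ↥Z → Qc → ↥D := fun z c =>
    ⟨c.out * f ↑z * c.out⁻¹, hDconj _ _ (hfZD ↑z z.2)⟩ with hvdef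
  have hvmul : ∀ (z w : ↥Z) (c : Qc), v (z * w) c = v z c * v w c := by
    intro z w c
    apply Subtype.ext
    show c.out * f (↑z * ↑w) * c.out⁻¹ = (c.out * f ↑z * c.out⁻¹) * (c.out * f ↑w * c.out⁻¹)
    rw [map_mul]
    group
  set Φ : ↥Z →* ↥D :=
    { toFun := fun z => ∏ c : Qc, v z c
      map_one' := by
        refine Finset.prod_eq_one fun c _ => ?_
        apply Subtype.ext
        show c.out * f ↑(1 : ↥Z) * c.out⁻¹ = 1
        simp
      map_mul' := by
        intro z w
        rw [← Finset.prod_mul_distrib]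
        exact Finset.prod_congr rfl fun c _ => hvmul z w c } with hΦdef
  -- P1 : Φ z is central
  have P1 : ∀ (z : ↥Z) (g : H ⧸ M), g * ↑(Φ z) * g⁻¹ = (↑(Φ z) : H ⧸ M) := by
    intro z g
    set cg : ↥D →* ↥D := MonoidHom.mk' (fun u => ⟨g * ↑u * g⁻¹, hDconj g ↑u u.2⟩)
      (by intro a b; apply Subtype.ext; show g * (↑a * ↑b) * g⁻¹ = _; push_cast; group) with hcg
    have key : cg (Φ z) = Φ z := by
      show cg (∏ c : Qc, v z c) = ∏ c : Qc, v z c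
      rw [map_prod]
      have hterm : ∀ c : Qc, cg (v z c) = v z (g • c) := by
        intro c
        apply Subtype.ext
        show g * (c.out * f ↑z * c.out⁻¹) * g⁻¹ = (g • c).out * f ↑z * (g • c).out⁻¹
        have hmk : (QuotientGroup.mk (g * c.out) : Qc) = g • c := by
          rw [← smul_eq_mul]
          exact MulAction.Quotient.mk_smul_out Smap g c
        rw [hrep (g • c) (g * c.out) hmk ↑z z.2]
        group
      calc ∏ c : Qc, cg (v z c) = ∏ c : Qc, v z (g • c) :=
            Finset.prod_congr rfl fun c _ => hterm c
        _ = ∏ c : Qc, v z c := Equiv.prod_comp (MulAction.toPerm g) (v z)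
    exact congrArg Subtype.val key
  have P1' : ∀ (z : ↥Z), (↑(Φ z) : H ⧸ M) ∈ Subgroup.center (H ⧸ M) := by
    intro z
    rw [Subgroup.mem_center_iff]
    intro g
    have := P1 z g
    calc g * ↑(Φ z) = g * ↑(Φ z) * g⁻¹ * g := by group
      _ = ↑(Φ z) * g := by rw [this]
  -- P3 : on elements with central image, Φ is the n-th power map
  have P3 : ∀ (z : ↥Z), f ↑z ∈ Subgroup.center (H ⧸ M) →
      (↑(Φ z) : H ⧸ M) = (f ↑z) ^ (Fintype.card Qc) := by
    intro z hzc
    have hv : ∀ c : Qc, v z c = ⟨f ↑z, hfZD ↑z z.2⟩ := by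
      intro c
      apply Subtype.ext
      show c.out * f ↑z * c.out⁻¹ = f ↑z
      have := Subgroup.mem_center_iff.mp hzc c.out
      calc c.out * f ↑z * c.out⁻¹ = f ↑z * c.out * c.out⁻¹ := by
            rw [show c.out * f ↑z = f ↑z * c.out from this]
        _ = f ↑z := by group
    show (↑(∏ c : Qc, v z c) : H ⧸ M) = _
    rw [Finset.prod_congr rfl fun c _ => hv c, Finset.prod_const, Finset.card_univ]
    push_cast
    rfl
  -- P5 : Φ z comes from an element of Z
  have P5 : ∀ (z : ↥Z), ∃ s ∈ Z, f s = ↑(Φ z) := by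
    intro z
    have hmem : (↑(Φ z) : H ⧸ M) ∈ Smap := hPle (Φ z).2.1
    obtain ⟨s, hsS, hfsz⟩ := hmem
    refine ⟨s, ⟨hsS, Subgroup.mem_centralizer_iff.mpr ?_⟩, hfsz⟩
    intro t ht
    have hcomm : f t * f s = f s * f t := by
      rw [hfsz]
      have h1 := P1 z (f t)
      calc f t * ↑(Φ z) = f t * ↑(Φ z) * (f t)⁻¹ * f t := by group
        _ = ↑(Φ z) * f t := by rw [h1]
    have h2 : t * s * t⁻¹ * s⁻¹ ∈ (S : Subgroup H) := by
      have h3 : t * s * t⁻¹ ∈ (S : Subgroup H) := by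
        exact Subgroup.mul_mem _ (Subgroup.mul_mem _ ht hsS) (Subgroup.inv_mem _ ht)
      exact Subgroup.mul_mem _ h3 (Subgroup.inv_mem _ hsS)
    have h4 : f (t * s * t⁻¹ * s⁻¹) = 1 := by
      simp only [map_mul, map_inv]
      rw [hcomm]
      group
    have h5 := key0 _ h2 h4
    have h6 : t * s = s * t := by
      have := congrArg (fun w => w * s * t) h5
      simpa [mul_assoc] using this
    exact h6
  -- numerics
  set n : ℕ := Fintype.card Qc with hndef
  have hindex : ¬ p ∣ n := by
    have h1 : (S.mapSurjective hfs : Subgroup (H ⧸ M)).index = n := by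
      rw [hSsylow]
      exact Nat.card_eq_fintype_card
    have h2 := (S.mapSurjective hfs).not_dvd_index
    rwa [h1] at h2
  have hZp : IsPGroup p ↥Z := S.isPGroup'.to_le inf_le_left
  set cZ : ℕ := Nat.card ↥Z with hcZdef
  have hcop : Nat.Coprime n cZ := by
    obtain ⟨a, ha⟩ : ∃ a, cZ = p ^ a := IsPGroup.iff_card.mp hZp
    rw [ha]
    exact Nat.Coprime.pow_right a ((hp.coprime_iff_not_dvd.mpr hindex).symm)
  haveI : NeZero cZ := ⟨Nat.card_pos.ne'⟩
  obtain ⟨m, hm⟩ : ∃ m : ℕ, (n * m) % cZ = 1 % cZ := by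
    refine ⟨ZMod.val (((ZMod.unitOfCoprime n hcop)⁻¹ : (ZMod cZ)ˣ) : ZMod cZ), ?_⟩
    have hcast : ((n * ZMod.val (((ZMod.unitOfCoprime n hcop)⁻¹ : (ZMod cZ)ˣ) : ZMod cZ) : ℕ) :
        ZMod cZ) = ((1 : ℕ) : ZMod cZ) := by
      push_cast
      rw [ZMod.natCast_val, ZMod.cast_id, ← ZMod.coe_unitOfCoprime n hcop, Units.mul_inv]
    exact (ZMod.natCast_eq_natCast_iff _ _ _).mp hcast
  have hpowfZ : ∀ x ∈ Z, ∀ k : ℕ, k % cZ = 1 % cZ → (f x) ^ k = f x := by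
    intro x hx k hk
    have hord : orderOf (f x) ∣ cZ :=
      dvd_trans (orderOf_map_dvd f x) (Subgroup.orderOf_dvd_natCard Z hx)
    have hmod : k ≡ 1 [MOD orderOf (f x)] := Nat.ModEq.of_dvd hord hk
    calc (f x) ^ k = (f x) ^ 1 := pow_eq_pow_iff_modEq.mpr hmod
      _ = f x := pow_one _
  -- the subgroups W and K
  set W : Subgroup H := Z ⊓ Subgroup.comap f (Subgroup.center (H ⧸ M)) with hWdef
  set K : Subgroup H := Subgroup.map Z.subtype Φ.ker with hKdef
  have hKZ : K ≤ Z := Subgroup.map_subtype_le _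
  refine ⟨W, K, ?_, hKZ, ?_, ?_⟩
  · -- W is the set of weakly closed elements
    ext x
    simp only [SetLike.mem_coe, Set.mem_setOf_eq]
    constructor
    · intro hxW
      obtain ⟨hxZ, hxc⟩ := hxW
      have hxc' : f x ∈ Subgroup.center (H ⧸ M) := Subgroup.mem_comap.mp hxc
      refine ⟨hxZ.1, ?_⟩
      intro g hg
      have hcen := Subgroup.mem_center_iff.mp hxc' ((f g)⁻¹)
      have hfeq : f (g⁻¹ * x * g) = f x := by
        simp only [map_mul, map_inv]
        calc (f g)⁻¹ * f x * f g = f x * (f g)⁻¹ * f g := by rw [hcen]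
          _ = f x := by group
      have hmem : (g⁻¹ * x * g) * x⁻¹ ∈ (S : Subgroup H) := mul_mem hg (inv_mem hxZ.1)
      have hone : f ((g⁻¹ * x * g) * x⁻¹) = 1 := by
        rw [map_mul, hfeq, map_inv]
        group
      have hkey := key0 _ hmem hone
      calc g⁻¹ * x * g = (g⁻¹ * x * g * x⁻¹) * x := by group
        _ = x := by rw [hkey]; group
    · rintro ⟨hxS, hwc⟩
      have hxZ : x ∈ Z := by
        refine ⟨hxS, Subgroup.mem_centralizer_iff.mpr ?_⟩
        intro t ht
        have h1 : t⁻¹ * x * t ∈ (S : Subgroup H) :=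
          mul_mem (mul_mem (inv_mem ht) hxS) ht
        have h2 := hwc t h1
        have h3 := congrArg (fun w => t * w) h2
        simpa [mul_assoc] using h3.symm
      have hxcen : f x ∈ Subgroup.center (H ⧸ M) := by
        rw [Subgroup.mem_center_iff]
        intro gq
        obtain ⟨g, rfl⟩ := hfs gq
        set y : H := g * x * g⁻¹ with hy
        have hfy : f y ∈ pCore p (H ⧸ M) := by
          have hc := hPnorm.conj_mem (f x) (hfZ x hxZ) (f g)
          simpa [hy, map_mul, map_inv] using hc
        obtain ⟨s, hsS, hfs_eq⟩ := hPle hfy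
        have hm0 : y * s⁻¹ ∈ M := by
          have : f (y * s⁻¹) = 1 := by rw [map_mul, map_inv, hfs_eq]; group
          exact (QuotientGroup.eq_one_iff _).mp this
        set N : Subgroup H := (S : Subgroup H) ⊔ M with hN
        have hyN : y ∈ N := by
          have h1 : y * s⁻¹ ∈ N := (le_sup_right : M ≤ N) hm0
          have h2 : s ∈ N := (le_sup_left : (S : Subgroup H) ≤ N) hsS
          have h3 := mul_mem h1 h2
          simpa using h3
        have hordy : ∃ k, orderOf y = p ^ k := by
          obtain ⟨k, hk⟩ := hordS x hxS
          have hsc : SemiconjBy g x y := by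
            rw [SemiconjBy, hy]; group
          exact ⟨k, (SemiconjBy.orderOf_eq g hsc).symm.trans hk⟩
        set SN : Sylow p ↥N := S.subtype (le_sup_left) with hSN
        have hyp' : IsPGroup p (Subgroup.zpowers (⟨y, hyN⟩ : ↥N)) := by
          obtain ⟨k, hk⟩ := hordy
          exact IsPGroup.of_card (by rw [Nat.card_zpowers, orderOf_mk, hk])
        obtain ⟨R, hR⟩ := hyp'.exists_le_sylow
        obtain ⟨uu, huu⟩ := MulAction.exists_smul_eq ↥N R SN
        have hyR : (⟨y, hyN⟩ : ↥N) ∈ (R : Subgroup ↥N) := hR (Subgroup.mem_zpowers _)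
        have hconj : ((MulAut.conj uu) (⟨y, hyN⟩ : ↥N)) ∈ (SN : Subgroup ↥N) := by
          have h1 : ((uu • R : Sylow p ↥N) : Subgroup ↥N) = MulAut.conj uu • (R : Subgroup ↥N) := by
            rw [Sylow.smul_def]; rfl
          have h2 : (MulAut.conj uu) (⟨y, hyN⟩ : ↥N) ∈ MulAut.conj uu • (R : Subgroup ↥N) :=
            (Subgroup.mem_smul_pointwise_iff_exists _ _ _).mpr ⟨_, hyR, rfl⟩
          rw [← h1, huu] at h2
          exact h2
        have hin : (↑uu * y * (↑uu)⁻¹ : H) ∈ (S : Subgroup H) := by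
          have h3 := hconj
          rw [hSN, Sylow.coe_subtype, Subgroup.mem_subgroupOf] at h3
          simpa using h3
        have hxy : (↑uu : H) * y * (↑uu : H)⁻¹ = x := by
          have h4 := hwc (((↑uu : H) * g)⁻¹) (by
            have h5 : (((↑uu : H) * g)⁻¹)⁻¹ * x * ((↑uu : H) * g)⁻¹
                = (↑uu : H) * y * (↑uu : H)⁻¹ := by rw [hy]; group
            rw [h5]; exact hin)
          have h5 : (((↑uu : H) * g)⁻¹)⁻¹ * x * ((↑uu : H) * g)⁻¹
              = (↑uu : H) * y * (↑uu : H)⁻¹ := by rw [hy]; group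
          rw [h5] at h4
          exact h4
        have huN : (↑uu : H) ∈ ((S : Subgroup H) : Set H) * (M : Set H) := by
          rw [← Subgroup.mul_normal (S : Subgroup H) M]
          exact uu.2
        obtain ⟨s0, hs0, m0, hm0', hprod⟩ := huN
        have hfm0 : f m0 = 1 := (QuotientGroup.eq_one_iff _).mpr hm0'
        have hfu : f (↑uu : H) = f s0 := by
          rw [← hprod, map_mul, hfm0, mul_one]
        have h7 : f x = f s0 * (f g * f x * (f g)⁻¹) * (f s0)⁻¹ := by
          conv_lhs => rw [← hxy]
          rw [hy]
          simp only [map_mul, map_inv, hfu]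
        have h8 : s0⁻¹ * x * s0 = x := by
          have h9 := hZcomm x hxZ s0 hs0
          calc s0⁻¹ * x * s0 = s0⁻¹ * (x * s0) := by group
            _ = s0⁻¹ * (s0 * x) := by rw [← h9]
            _ = x := by group
        have h11 : (f s0)⁻¹ * f x * f s0 = f x := by
          have h12 := congrArg f h8
          simpa [map_mul, map_inv] using h12
        have h9 : f g * f x * (f g)⁻¹ = f x := by
          calc f g * f x * (f g)⁻¹
              = (f s0)⁻¹ * (f s0 * (f g * f x * (f g)⁻¹) * (f s0)⁻¹) * f s0 := by group
            _ = (f s0)⁻¹ * f x * f s0 := by rw [← h7]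
            _ = f x := h11
        calc f g * f x = f g * f x * (f g)⁻¹ * f g := by group
          _ = f x * f g := by rw [h9]
      exact ⟨hxZ, Subgroup.mem_comap.mpr hxcen⟩
  · -- W ⊔ K = Z
    apply le_antisymm
    · exact sup_le inf_le_left hKZ
    · intro z hz
      obtain ⟨s, hsZ, hfs_eq⟩ := P5 ⟨z, hz⟩
      have hwZ : s ^ m ∈ Z := pow_mem hsZ m
      have hfw_cen : f (s ^ m) ∈ Subgroup.center (H ⧸ M) := by
        rw [map_pow]
        exact pow_mem (by rw [hfs_eq]; exact P1' ⟨z, hz⟩) m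
      have hwW : s ^ m ∈ W := ⟨hwZ, Subgroup.mem_comap.mpr hfw_cen⟩
      have hmn : (m * n) % cZ = 1 % cZ := by rw [Nat.mul_comm]; exact hm
      have hΦw : Φ ⟨s ^ m, hwZ⟩ = Φ ⟨z, hz⟩ := by
        apply Subtype.ext
        rw [P3 ⟨s ^ m, hwZ⟩ hfw_cen]
        show (f (s ^ m)) ^ n = _
        rw [map_pow, ← pow_mul, hpowfZ s hsZ (m * n) hmn, hfs_eq]
      have hker : (⟨s ^ m, hwZ⟩ : ↥Z)⁻¹ * ⟨z, hz⟩ ∈ Φ.ker := by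
        rw [MonoidHom.mem_ker, map_mul, map_inv, hΦw]
        simp
      have hkK : (s ^ m)⁻¹ * z ∈ K := Subgroup.mem_map.mpr ⟨_, hker, rfl⟩
      have hzsplit : z = (s ^ m) * ((s ^ m)⁻¹ * z) := by group
      rw [hzsplit]
      exact mul_mem ((le_sup_left : W ≤ W ⊔ K) hwW) ((le_sup_right : K ≤ W ⊔ K) hkK)
  · -- W ⊓ K = ⊥
    rw [eq_bot_iff]
    intro x hx
    obtain ⟨hxW, hxK⟩ := hx
    obtain ⟨x', hx'ker, rfl⟩ := Subgroup.mem_map.mp hxK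
    obtain ⟨hxZ, hxc⟩ := hxW
    have hxc' : f (↑x' : H) ∈ Subgroup.center (H ⧸ M) := Subgroup.mem_comap.mp hxc
    have hΦx : Φ x' = 1 := hx'ker
    have h1 : (f (↑x' : H)) ^ n = 1 := by
      have h2 := P3 x' hxc'
      rw [hΦx] at h2
      rw [← h2]
      rfl
    have hordx : orderOf (f (↑x' : H)) ∣ n := orderOf_dvd_of_pow_eq_one h1
    have hordx2 : orderOf (f (↑x' : H)) ∣ cZ :=
      dvd_trans (orderOf_map_dvd f _) (Subgroup.orderOf_dvd_natCard Z x'.2)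
    have hord1 : orderOf (f (↑x' : H)) = 1 :=
      Nat.eq_one_of_dvd_one (hcop ▸ Nat.dvd_gcd hordx hordx2)
    have hfx1 : f (↑x' : H) = 1 := orderOf_eq_one_iff.mp hord1
    have hx1 : (↑x' : H) = 1 := key0 _ x'.2.1 hfx1
    simp only [Subgroup.mem_bot]
    exact hx1
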